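/- Let (u,v) ∈ 𝔥_α \ {(0,0)}. If G_β(u,v) < 0, then J(u,v) > c_β, where J(u,v) := ¼ ‖(u,v)‖²_{𝔥_α} = ¼(⟨(−Δ_α+ω)u,u⟩ + ‖∇v‖₂² + ω̃‖v‖₂²). -/

import Mathlib

/-!
Along the ray `t ↦ t • (u, v)` the Nehari functional is `t² ‖(u,v)‖² - t⁴ N(u,v)`, with `N` the
quartic part of `I_β`. If `G_β(u,v) < 0` then `N > ‖(u,v)‖² > 0` (the norm cannot vanish, since then
`u = v = 0` a.e. and `G_β(u,v) = 0`), so `t² = ‖(u,v)‖² / N < 1` puts `t • (u, v)` on `𝒩_β`, where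
`I_β = J = t² ‖(u,v)‖² / 4 < J(u,v)`.
-/

open MeasureTheory Real Filter Topology

noncomputable section

/-- The plane `ℝ²`. -/
abbrev Plane : Type := EuclideanSpace ℝ (Fin 2)

/-- Squared `L²` norm `‖f‖₂²`. -/
noncomputable def L2sq (f : Plane → ℂ) : ℝ := ∫ x, ‖f x‖ ^ 2

/-- Squared `L²` norm of the gradient, `‖∇f‖₂²`. -/
noncomputable def gradSq (f : Plane → ℂ) : ℝ := ∫ x, ‖fderiv ℝ f x‖ ^ 2

/-- Fourth power of the `L⁴` norm, `‖f‖₄⁴`. -/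
noncomputable def L4q (f : Plane → ℂ) : ℝ := ∫ x, ‖f x‖ ^ 4

/-- The coupling integral `∫_{ℝ²} |uv|²`. -/
noncomputable def mixedInt (u v : Plane → ℂ) : ℝ := ∫ x, ‖u x‖ ^ 2 * ‖v x‖ ^ 2

/-- The Sobolev space `H¹(ℝ²)` (complex valued): `f` and its gradient are in `L²`. -/
def H1 : Set (Plane → ℂ) :=
  {f | MemLp f 2 volume ∧ MemLp (fun x => fderiv ℝ f x) 2 volume}

/-- Squared `H¹` norm. -/
noncomputable def H1sq (f : Plane → ℂ) : ℝ := gradSq f + L2sq f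

/-- `ω_α = 4 e^{-4πα - 2γ}`, the opposite of the unique negative eigenvalue of `-Δ_α`. -/
noncomputable def omegaAlpha (α : ℝ) : ℝ :=
  4 * Real.exp (-4 * Real.pi * α - 2 * Real.eulerMascheroniConstant)

/-- `θ_λ = (log(√λ/2) + γ)/(2π)`. -/
noncomputable def thetaLam (lam : ℝ) : ℝ :=
  (Real.log (Real.sqrt lam / 2) + Real.eulerMascheroniConstant) / (2 * Real.pi)

/-- The modified Bessel function `K₀`. -/
noncomputable def besselK0 (r : ℝ) : ℝ := ∫ t in Set.Ioi (0 : ℝ), Real.exp (-r * Real.cosh t)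

/-- The Green function `G_λ` of `-Δ + λ` on `ℝ²`, `G_λ(x) = (2π)⁻¹ K₀(√λ |x|)`. -/
noncomputable def Green (lam : ℝ) : Plane → ℂ :=
  fun x => ((1 / (2 * Real.pi)) * besselK0 (Real.sqrt lam * ‖x‖) : ℝ)

/-- The energy space `H¹_α(ℝ²)`, described through the decomposition `u = φ + q G_λ`. -/
def H1alpha (lam : ℝ) : Set (Plane → ℂ) :=
  {u | ∃ φ ∈ H1, ∃ q : ℂ, u = φ + q • Green lam}

/-- The quadratic form `⟨(-Δ_α + ω)u, u⟩` of `u = φ + q G_λ`, expressed through the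
decomposition data `(φ, q)`. -/
noncomputable def quadForm (α ω lam : ℝ) (φ : Plane → ℂ) (q : ℂ) : ℝ :=
  gradSq φ + lam * L2sq φ + (ω - lam) * L2sq (φ + q • Green lam)
    + (α + thetaLam lam) * ‖q‖ ^ 2

/-- The action functional `I_β(u,v)` for the system `(𝒫_β)`, on decomposed data
`u = φ + q G_λ`. -/
noncomputable def Ifun (α ω ωt β lam : ℝ) (φ : Plane → ℂ) (q : ℂ) (v : Plane → ℂ) : ℝ :=
  (1 / 2) * (quadForm α ω lam φ q + gradSq v + ωt * L2sq v)
    - (1 / 4) * (L4q (φ + q • Green lam) + L4q v)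
    - (β / 2) * mixedInt (φ + q • Green lam) v

/-- The Nehari functional `G_β(u,v)`. -/
noncomputable def Gfun (α ω ωt β lam : ℝ) (φ : Plane → ℂ) (q : ℂ) (v : Plane → ℂ) : ℝ :=
  quadForm α ω lam φ q + gradSq v + ωt * L2sq v
    - (L4q (φ + q • Green lam) + L4q v)
    - 2 * β * mixedInt (φ + q • Green lam) v

/-- Membership in the Nehari manifold `𝒩_β`, on decomposed data. -/
def InNehari (α ω ωt β lam : ℝ) (φ : Plane → ℂ) (q : ℂ) (v : Plane → ℂ) : Prop :=
  φ ∈ H1 ∧ v ∈ H1 ∧ ¬(φ + q • Green lam = 0 ∧ v = 0) ∧ Gfun α ω ωt β lam φ q v = 0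

/-- The ground state level `c_β = inf_{𝒩_β} I_β`. -/
noncomputable def clevel (α ω ωt β lam : ℝ) : ℝ :=
  sInf {r : ℝ | ∃ φ q v, InNehari α ω ωt β lam φ q v ∧ r = Ifun α ω ωt β lam φ q v}

/-- `(u,v) = (φ + q G_λ, v)` is a ground state of `(𝒫_β)`, i.e. a minimizer for `c_β`. -/
def IsGroundState (α ω ωt β lam : ℝ) (φ : Plane → ℂ) (q : ℂ) (v : Plane → ℂ) : Prop :=
  InNehari α ω ωt β lam φ q v ∧ Ifun α ω ωt β lam φ q v = clevel α ω ωt β lam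

/-- The action functional `I⁰_β(u,v)` without point interaction. -/
noncomputable def I0fun (ω ωt β : ℝ) (u v : Plane → ℂ) : ℝ :=
  (1 / 2) * (gradSq u + ω * L2sq u + gradSq v + ωt * L2sq v)
    - (1 / 4) * (L4q u + L4q v) - (β / 2) * mixedInt u v

/-- The Nehari functional `G⁰_β(u,v)` without point interaction. -/
noncomputable def G0fun (ω ωt β : ℝ) (u v : Plane → ℂ) : ℝ :=
  gradSq u + ω * L2sq u + gradSq v + ωt * L2sq v
    - (L4q u + L4q v) - 2 * β * mixedInt u v

/-- Membership in the Nehari manifold `𝒩⁰_β`. -/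
def InNehari0 (ω ωt β : ℝ) (u v : Plane → ℂ) : Prop :=
  u ∈ H1 ∧ v ∈ H1 ∧ ¬(u = 0 ∧ v = 0) ∧ G0fun ω ωt β u v = 0

/-- The ground state level `c⁰_β` without point interaction. -/
noncomputable def c0level (ω ωt β : ℝ) : ℝ :=
  sInf {r : ℝ | ∃ u v, InNehari0 ω ωt β u v ∧ r = I0fun ω ωt β u v}

/-- The single-equation action `S_ω(u)` with point interaction. -/
noncomputable def Sfun (α ω lam : ℝ) (φ : Plane → ℂ) (q : ℂ) : ℝ :=
  (1 / 2) * quadForm α ω lam φ q - (1 / 4) * L4q (φ + q • Green lam)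

/-- The single-equation ground state level `d(ω)` with point interaction. -/
noncomputable def dlevel (α ω lam : ℝ) : ℝ :=
  sInf {r : ℝ | ∃ φ ∈ H1, ∃ q : ℂ, φ + q • Green lam ≠ 0 ∧
    quadForm α ω lam φ q = L4q (φ + q • Green lam) ∧ r = Sfun α ω lam φ q}

/-- The single-equation ground state level `d⁰(ω̃)` without point interaction. -/
noncomputable def d0level (ωt : ℝ) : ℝ :=
  sInf {r : ℝ | ∃ v ∈ H1, v ≠ 0 ∧ gradSq v + ωt * L2sq v = L4q v ∧
    r = (1 / 2) * (gradSq v + ωt * L2sq v) - (1 / 4) * L4q v}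

/-- The limit action functional `Ĩ_∞(u,v)`. -/
noncomputable def IInf (α ω ωt lam : ℝ) (φ : Plane → ℂ) (q : ℂ) (v : Plane → ℂ) : ℝ :=
  (1 / 2) * (quadForm α ω lam φ q + gradSq v + ωt * L2sq v)
    - (1 / 2) * mixedInt (φ + q • Green lam) v

/-- The limit Nehari functional `G̃_∞(u,v)`. -/
noncomputable def GInf (α ω ωt lam : ℝ) (φ : Plane → ℂ) (q : ℂ) (v : Plane → ℂ) : ℝ :=
  quadForm α ω lam φ q + gradSq v + ωt * L2sq v - 2 * mixedInt (φ + q • Green lam) v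

/-- Membership in the limit Nehari manifold `𝒩̃_∞`. -/
def InNehariInf (α ω ωt lam : ℝ) (φ : Plane → ℂ) (q : ℂ) (v : Plane → ℂ) : Prop :=
  φ ∈ H1 ∧ v ∈ H1 ∧ ¬(φ + q • Green lam = 0 ∧ v = 0) ∧ GInf α ω ωt lam φ q v = 0

/-- The limit ground state level `c̃_∞`. -/
noncomputable def cInf (α ω ωt lam : ℝ) : ℝ :=
  sInf {r : ℝ | ∃ φ q v, InNehariInf α ω ωt lam φ q v ∧ r = IInf α ω ωt lam φ q v}

/-- `(φ + q G_λ, v)` is a ground state of the limit problem `(𝒫̃_∞)`. -/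
def IsGroundStateInf (α ω ωt lam : ℝ) (φ : Plane → ℂ) (q : ℂ) (v : Plane → ℂ) : Prop :=
  InNehariInf α ω ωt lam φ q v ∧ IInf α ω ωt lam φ q v = cInf α ω ωt lam


lemma L2sq_nonneg (f : Plane → ℂ) : 0 ≤ L2sq f := integral_nonneg fun _ => by positivity

lemma gradSq_nonneg (f : Plane → ℂ) : 0 ≤ gradSq f := integral_nonneg fun _ => by positivity

lemma L2sq_smul (t : ℝ) (f : Plane → ℂ) : L2sq (t • f) = t ^ 2 * L2sq f := by
  simp only [L2sq, ← integral_const_mul, Pi.smul_apply, norm_smul, mul_pow, Real.norm_eq_abs,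
    sq_abs]

lemma gradSq_smul (t : ℝ) (f : Plane → ℂ) : gradSq (t • f) = t ^ 2 * gradSq f := by
  simp only [gradSq, ← integral_const_mul, fderiv_const_smul_field, Pi.smul_apply, norm_smul,
    mul_pow, Real.norm_eq_abs, sq_abs]

lemma L4q_smul (t : ℝ) (f : Plane → ℂ) : L4q (t • f) = t ^ 4 * L4q f := by
  simp only [L4q, ← integral_const_mul, Pi.smul_apply, norm_smul, mul_pow, Real.norm_eq_abs,
    pow_abs, abs_of_nonneg (by positivity : (0 : ℝ) ≤ t ^ 4)]

lemma mixedInt_smul (t : ℝ) (u v : Plane → ℂ) :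
    mixedInt (t • u) (t • v) = t ^ 4 * mixedInt u v := by
  simp only [mixedInt, ← integral_const_mul, Pi.smul_apply, norm_smul, mul_pow, Real.norm_eq_abs,
    sq_abs]
  congr 1 with x
  ring

lemma smul_mem_H1 (t : ℝ) {f : Plane → ℂ} (hf : f ∈ H1) : t • f ∈ H1 := by
  refine ⟨hf.1.const_smul t, ?_⟩
  simpa only [fderiv_const_smul_field] using hf.2.const_smul t

lemma ae_eq_zero_of_L2sq_eq_zero {f : Plane → ℂ} (hf : MemLp f 2 volume) (h : L2sq f = 0) :
    f =ᵐ[volume] 0 := by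
  have hint : Integrable (fun x => ‖f x‖ ^ 2) volume := hf.integrable_norm_pow two_ne_zero
  filter_upwards [(integral_eq_zero_iff_of_nonneg (fun _ => by positivity) hint).1 h] with x hx
  simpa using hx

lemma L4q_eq_zero_of_ae_eq_zero {f : Plane → ℂ} (h : f =ᵐ[volume] 0) : L4q f = 0 :=
  integral_eq_zero_of_ae (by filter_upwards [h] with x hx; simp [hx])

lemma mixedInt_eq_zero_of_ae_eq_zero {u : Plane → ℂ} (h : u =ᵐ[volume] 0) (v : Plane → ℂ) :
    mixedInt u v = 0 :=
  integral_eq_zero_of_ae (by filter_upwards [h] with x hx; simp [hx])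

lemma omegaAlpha_pos (α : ℝ) : 0 < omegaAlpha α := by
  unfold omegaAlpha; positivity

lemma add_thetaLam_pos {α lam : ℝ} (h : omegaAlpha α < lam) : 0 < α + thetaLam lam := by
  have hlog := Real.log_lt_log (omegaAlpha_pos α) h
  rw [omegaAlpha, Real.log_mul (by norm_num) (Real.exp_pos _).ne', Real.log_exp,
    show (4 : ℝ) = 2 ^ 2 by norm_num, Real.log_pow] at hlog
  have hlam : 0 < lam := (omegaAlpha_pos α).trans h
  rw [thetaLam, Real.log_div (Real.sqrt_pos.2 hlam).ne' two_ne_zero, Real.log_sqrt hlam.le,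
    ← neg_lt_iff_pos_add', lt_div_iff₀ (by positivity)]
  push_cast at hlog
  linarith

section Nehari

variable (α ω ωt β lam : ℝ) (φ : Plane → ℂ) (q : ℂ) (v : Plane → ℂ)

/-- `‖(u,v)‖²_{𝔥_α}` for `u = φ + q G_λ`. -/
def energyNormSq : ℝ := quadForm α ω lam φ q + gradSq v + ωt * L2sq v

def nehariQuartic : ℝ :=
  L4q (φ + q • Green lam) + L4q v + 2 * β * mixedInt (φ + q • Green lam) v

lemma Gfun_eq_energyNormSq_sub :
    Gfun α ω ωt β lam φ q v = energyNormSq α ω ωt lam φ q v - nehariQuartic β lam φ q v := by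
  unfold Gfun energyNormSq nehariQuartic; ring

lemma Ifun_eq_energyNormSq_sub :
    Ifun α ω ωt β lam φ q v =
      energyNormSq α ω ωt lam φ q v / 2 - nehariQuartic β lam φ q v / 4 := by
  unfold Ifun energyNormSq nehariQuartic; ring

lemma smul_add_smul_Green (t : ℝ) :
    t • φ + (t • q) • Green lam = t • (φ + q • Green lam) := by
  rw [smul_assoc, smul_add]

lemma quadForm_smul (t : ℝ) : quadForm α ω lam (t • φ) (t • q) = t ^ 2 * quadForm α ω lam φ q := by
  unfold quadForm
  rw [smul_add_smul_Green, gradSq_smul, L2sq_smul, L2sq_smul, norm_smul, Real.norm_eq_abs,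
    mul_pow, sq_abs]
  ring

lemma energyNormSq_smul (t : ℝ) :
    energyNormSq α ω ωt lam (t • φ) (t • q) (t • v) = t ^ 2 * energyNormSq α ω ωt lam φ q v := by
  unfold energyNormSq
  rw [quadForm_smul, gradSq_smul, L2sq_smul]
  ring

lemma nehariQuartic_smul (t : ℝ) :
    nehariQuartic β lam (t • φ) (t • q) (t • v) = t ^ 4 * nehariQuartic β lam φ q v := by
  unfold nehariQuartic
  rw [smul_add_smul_Green, L4q_smul, L4q_smul, mixedInt_smul]
  ring

variable {α ω ωt β lam φ q v}

lemma quadForm_nonneg (hlam : omegaAlpha α < lam) (hω : lam ≤ ω) : 0 ≤ quadForm α ω lam φ q := by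
  have := L2sq_nonneg φ
  have := L2sq_nonneg (φ + q • Green lam)
  have := gradSq_nonneg φ
  have := (omegaAlpha_pos α).trans hlam
  have := add_thetaLam_pos hlam
  have : 0 ≤ ω - lam := sub_nonneg.2 hω
  unfold quadForm
  positivity

lemma energyNormSq_nonneg (hlam : omegaAlpha α < lam) (hω : lam ≤ ω) (hωt : 0 ≤ ωt) :
    0 ≤ energyNormSq α ω ωt lam φ q v := by
  have := quadForm_nonneg (φ := φ) (q := q) hlam hω
  have := gradSq_nonneg v
  have := L2sq_nonneg v
  unfold energyNormSq
  positivity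

lemma nehariQuartic_eq_zero_of_energyNormSq_eq_zero (hlam : omegaAlpha α < lam) (hω : lam ≤ ω)
    (hωt : 0 < ωt) (hφ : MemLp φ 2 volume) (hv : MemLp v 2 volume)
    (h : energyNormSq α ω ωt lam φ q v = 0) : nehariQuartic β lam φ q v = 0 := by
  have hlam0 : 0 < lam := (omegaAlpha_pos α).trans hlam
  have hθ := add_thetaLam_pos hlam
  have := L2sq_nonneg φ
  have := L2sq_nonneg v
  have := gradSq_nonneg φ
  have := gradSq_nonneg v
  have := sq_nonneg ‖q‖
  have := mul_nonneg (sub_nonneg.2 hω) (L2sq_nonneg (φ + q • Green lam))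
  unfold energyNormSq quadForm at h
  have hφ0 : L2sq φ = 0 := by nlinarith
  have hv0 : L2sq v = 0 := by nlinarith
  have hq0 : q = 0 := by
    have : ‖q‖ ^ 2 = 0 := by nlinarith
    simpa using this
  have hu : φ + q • Green lam =ᵐ[volume] 0 := by
    simpa [hq0] using ae_eq_zero_of_L2sq_eq_zero hφ hφ0
  rw [nehariQuartic, L4q_eq_zero_of_ae_eq_zero hu,
    L4q_eq_zero_of_ae_eq_zero (ae_eq_zero_of_L2sq_eq_zero hv hv0),
    mixedInt_eq_zero_of_ae_eq_zero hu]
  ring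

lemma clevel_le_Ifun (hlam : omegaAlpha α < lam) (hω : lam ≤ ω) (hωt : 0 ≤ ωt)
    (h : InNehari α ω ωt β lam φ q v) : clevel α ω ωt β lam ≤ Ifun α ω ωt β lam φ q v := by
  refine csInf_le ⟨0, ?_⟩ ⟨φ, q, v, h, rfl⟩
  rintro r ⟨φ', q', v', ⟨-, -, -, hG⟩, rfl⟩
  rw [Gfun_eq_energyNormSq_sub] at hG
  rw [Ifun_eq_energyNormSq_sub]
  linarith [energyNormSq_nonneg (φ := φ') (q := q') (v := v') hlam hω hωt]

end Nehari

lemma exists_pow_four_mul_eq_sq_mul {Q N : ℝ} (hQ : 0 < Q) (hQN : Q < N) :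
    ∃ t : ℝ, t ≠ 0 ∧ t ^ 4 * N = t ^ 2 * Q ∧ t ^ 2 < 1 := by
  have hN : 0 < N := hQ.trans hQN
  have ht : √(Q / N) ^ 2 = Q / N := Real.sq_sqrt (div_pos hQ hN).le
  refine ⟨√(Q / N), (Real.sqrt_pos.2 (div_pos hQ hN)).ne', ?_, ?_⟩
  · rw [show (4 : ℕ) = 2 * 2 from rfl, pow_mul, ht]
    field_simp
  · rwa [ht, div_lt_one hN]

theorem J_gt_clevel_of_G_neg_general (α ω ωt β lam : ℝ)
    (hωt : 0 < ωt)
    (hlam1 : omegaAlpha α < lam) (hlam2 : lam ≤ ω)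
    (φ : Plane → ℂ) (q : ℂ) (v : Plane → ℂ)
    (hφ : φ ∈ H1) (hv : v ∈ H1)
    (hne : ¬(φ + q • Green lam = 0 ∧ v = 0))
    (hG : Gfun α ω ωt β lam φ q v < 0) :
    clevel α ω ωt β lam <
      (1 / 4) * (quadForm α ω lam φ q + gradSq v + ωt * L2sq v) := by
  change _ < 1 / 4 * energyNormSq α ω ωt lam φ q v
  rw [Gfun_eq_energyNormSq_sub, sub_neg] at hG
  have hE : 0 < energyNormSq α ω ωt lam φ q v := by
    refine (energyNormSq_nonneg hlam1 hlam2 hωt.le).lt_of_ne' fun h0 => ?_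
    rw [h0, nehariQuartic_eq_zero_of_energyNormSq_eq_zero hlam1 hlam2 hωt hφ.1 hv.1 h0] at hG
    exact hG.false
  obtain ⟨t, ht0, hroot, ht1⟩ := exists_pow_four_mul_eq_sq_mul hE hG
  have hN : InNehari α ω ωt β lam (t • φ) (t • q) (t • v) := by
    refine ⟨smul_mem_H1 t hφ, smul_mem_H1 t hv, ?_, ?_⟩
    · rwa [smul_add_smul_Green, smul_eq_zero_iff_right ht0, smul_eq_zero_iff_right ht0]
    · rw [Gfun_eq_energyNormSq_sub, energyNormSq_smul, nehariQuartic_smul, hroot, sub_self]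
  calc clevel α ω ωt β lam ≤ Ifun α ω ωt β lam (t • φ) (t • q) (t • v) :=
        clevel_le_Ifun hlam1 hlam2 hωt.le hN
    _ = t ^ 2 * energyNormSq α ω ωt lam φ q v / 4 := by
        rw [Ifun_eq_energyNormSq_sub, energyNormSq_smul, nehariQuartic_smul, hroot]; ring
    _ < 1 / 4 * energyNormSq α ω ωt lam φ q v := by linarith [mul_lt_mul_of_pos_right ht1 hE]

/-- Lemma `lemm17`. If `(u,v) = (φ + q G_λ, v) ∈ 𝔥_α \ {(0,0)}` and
`G_β(u,v) < 0`, then `J(u,v) = ¼‖(u,v)‖²_{𝔥_α} > c_β`. -/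
theorem J_gt_clevel_of_G_neg (α ω ωt β lam : ℝ)
    (hω : omegaAlpha α < ω) (hωt : 0 < ωt) (hβ : 0 ≤ β)
    (hlam1 : omegaAlpha α < lam) (hlam2 : lam ≤ ω)
    (φ : Plane → ℂ) (q : ℂ) (v : Plane → ℂ)
    (hφ : φ ∈ H1) (hv : v ∈ H1)
    (hne : ¬(φ + q • Green lam = 0 ∧ v = 0))
    (hG : Gfun α ω ωt β lam φ q v < 0) :
    clevel α ω ωt β lam <
      (1 / 4) * (quadForm α ω lam φ q + gradSq v + ωt * L2sq v) :=
  J_gt_clevel_of_G_neg_general α ω ωt β lam hωt hlam1 hlam2 φ q v hφ hv hne hG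

end
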